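/- Let $G(r,t) = (4\pi t)^{-3/2} e^{-t} \frac{r}{\sinh r} e^{-r^2/(4t)}$ and $Q(r) = \frac{r}{\sinh r}$. Fix $a > 0$ and $r > a$. Then $\lim_{t \to \infty} t^{3/2} e^{t}\, \big( G(r-a, t) - G(r, t) \big) = (4\pi)^{-3/2}\big( Q(r-a) - Q(r) \big) > 0$. In particular, for the solution $u(x,t)$ of the heat equation on $\mathbb{H}^3$ with initial datum a unit Dirac mass displaced to a point at distance $a$ from the pole, whose values along the axis through the pole and the displaced point are $u = G(r-a,t)$, the renormalized sup-norm difference $t^{3/2} e^{t} \|u(\cdot,t) - G(\cdot,t)\|_\infty$ does not tend to $0$. -/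

import Mathlib

open Real Filter

/-- The limit profile `Q(r) = r / sinh r`, extended continuously by `Q(0) = 1`. -/
noncomputable def limitProfile (r : ℝ) : ℝ :=
  if r = 0 then 1 else r / Real.sinh r

/-- The fundamental solution of the heat equation on `ℍ³` in geodesic polar
coordinates: `G(r,t) = (4πt)^(-3/2) e^{-t} (r / sinh r) e^{-r²/(4t)}`. -/
noncomputable def hypHeatKernel (r t : ℝ) : ℝ :=
  (4 * π * t) ^ (-(3 : ℝ) / 2) * Real.exp (-t) * (r / Real.sinh r) *
    Real.exp (-r ^ 2 / (4 * t))

/-!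
The renormalisation `t^{3/2} e^t` cancels the prefactor `t^{-3/2} e^{-t}` of the heat kernel
exactly, and the remaining Gaussian factor `e^{-r²/(4t)}` tends to `1`, which gives the limit
`(4π)^{-3/2} (Q(r-a) - Q(r))`. It is positive because `1 / Q(x) = sinh x / x` is the slope of the
secant of `sinh` through the origin, and `sinh` is strictly convex on `[0, ∞)`. A nonzero limit
rules out any dominating `N` with renormalised limit `0`.
-/

open Set

lemma strictConvexOn_sinh : StrictConvexOn ℝ (Ici 0) sinh :=
  StrictMonoOn.strictConvexOn_of_deriv (convex_Ici 0) continuous_sinh.continuousOn <| by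
    rw [Real.deriv_sinh, interior_Ici]
    exact cosh_strictMonoOn.mono Ioi_subset_Ici_self

lemma strictMonoOn_sinh_div_self : StrictMonoOn (fun x => sinh x / x) (Ioi 0) := by
  intro x hx y hy hxy
  simpa using strictConvexOn_sinh.secant_strict_mono self_mem_Ici (Ioi_subset_Ici_self hx)
    (Ioi_subset_Ici_self hy) (ne_of_gt hx) (ne_of_gt hy) hxy

lemma limitProfile_of_ne_zero {r : ℝ} (hr : r ≠ 0) : limitProfile r = r / sinh r :=
  if_neg hr

lemma limitProfile_strictAntiOn : StrictAntiOn limitProfile (Ioi 0) := by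
  intro x hx y hy hxy
  rw [limitProfile_of_ne_zero (ne_of_gt hx), limitProfile_of_ne_zero (ne_of_gt hy),
    ← inv_div, ← inv_div (sinh x)]
  have hx_pos : 0 < sinh x / x := div_pos (sinh_pos_iff.2 hx) hx
  exact inv_strictAntiOn hx_pos (hx_pos.trans (strictMonoOn_sinh_div_self hx hy hxy))
    (strictMonoOn_sinh_div_self hx hy hxy)

lemma rpow_mul_exp_mul_hypHeatKernel {t : ℝ} (ht : 0 < t) (r : ℝ) :
    t ^ ((3 : ℝ) / 2) * exp t * hypHeatKernel r t
      = (4 * π) ^ (-(3 : ℝ) / 2) * (r / sinh r) * exp (-r ^ 2 / (4 * t)) := by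
  have hpow : t ^ ((3 : ℝ) / 2) * t ^ (-(3 : ℝ) / 2) = 1 := by
    rw [← rpow_add ht]; norm_num
  have hexp : exp t * exp (-t) = 1 := by rw [← exp_add, add_neg_cancel, exp_zero]
  rw [hypHeatKernel, mul_rpow (by positivity) ht.le]
  calc _ = (t ^ ((3 : ℝ) / 2) * t ^ (-(3 : ℝ) / 2)) * (exp t * exp (-t)) *
        ((4 * π) ^ (-(3 : ℝ) / 2) * (r / sinh r) * exp (-r ^ 2 / (4 * t))) := by ring
    _ = _ := by rw [hpow, hexp, one_mul, one_mul]

lemma tendsto_exp_neg_sq_div_atTop (r : ℝ) :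
    Tendsto (fun t : ℝ => exp (-r ^ 2 / (4 * t))) atTop (nhds 1) := by
  have h : Tendsto (fun t : ℝ => -r ^ 2 / (4 * t)) atTop (nhds 0) :=
    tendsto_const_nhds.div_atTop (tendsto_id.const_mul_atTop (by norm_num))
  simpa [Function.comp_def] using (continuous_exp.tendsto 0).comp h

lemma tendsto_rpow_mul_exp_mul_hypHeatKernel (r : ℝ) :
    Tendsto (fun t : ℝ => t ^ ((3 : ℝ) / 2) * exp t * hypHeatKernel r t) atTop
      (nhds ((4 * π) ^ (-(3 : ℝ) / 2) * (r / sinh r))) := by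
  have h := (tendsto_exp_neg_sq_div_atTop r).const_mul ((4 * π) ^ (-(3 : ℝ) / 2) * (r / sinh r))
  rw [mul_one] at h
  refine h.congr' ?_
  filter_upwards [eventually_gt_atTop 0] with t ht
  rw [rpow_mul_exp_mul_hypHeatKernel ht]

lemma not_tendsto_zero_of_abs_le {α : Type*} {l : Filter α} [l.NeBot] {u v : α → ℝ} {L : ℝ}
    (hu : Tendsto u l (nhds L)) (hL : L ≠ 0) (huv : ∀ᶠ x in l, |u x| ≤ v x) :
    ¬ Tendsto v l (nhds 0) := fun hv =>
  hL (tendsto_nhds_unique hu (squeeze_zero_norm' huv hv))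

/-- For a displaced Dirac mass at distance `a` from the pole, along the axis (where the
solution equals `G(r-a,t)`) one has
`t^{3/2} e^t (G(r-a,t) - G(r,t)) → (4π)^{-3/2} (Q(r-a) - Q(r)) > 0`;
consequently no renormalized sup-norm `N` dominating this pointwise difference can tend
to `0`. -/
theorem displaced_mass_no_sup_convergence (a r : ℝ) (ha : 0 < a) (hr : a < r) :
    Tendsto (fun t : ℝ =>
        t ^ ((3 : ℝ) / 2) * Real.exp t * (hypHeatKernel (r - a) t - hypHeatKernel r t))
      atTop (nhds ((4 * π) ^ (-(3 : ℝ) / 2) * (limitProfile (r - a) - limitProfile r))) ∧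
    0 < (4 * π) ^ (-(3 : ℝ) / 2) * (limitProfile (r - a) - limitProfile r) ∧
    ∀ N : ℝ → ℝ, (∀ t : ℝ, |hypHeatKernel (r - a) t - hypHeatKernel r t| ≤ N t) →
      ¬ Tendsto (fun t : ℝ => t ^ ((3 : ℝ) / 2) * Real.exp t * N t) atTop (nhds 0) := by
  have hra : 0 < r - a := sub_pos.2 hr
  have hr₀ : 0 < r := hra.trans (sub_lt_self r ha)
  have hlim : Tendsto (fun t : ℝ =>
        t ^ ((3 : ℝ) / 2) * exp t * (hypHeatKernel (r - a) t - hypHeatKernel r t))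
      atTop (nhds ((4 * π) ^ (-(3 : ℝ) / 2) * (limitProfile (r - a) - limitProfile r))) := by
    rw [limitProfile_of_ne_zero hra.ne', limitProfile_of_ne_zero hr₀.ne']
    simpa only [mul_sub] using (tendsto_rpow_mul_exp_mul_hypHeatKernel (r - a)).sub
      (tendsto_rpow_mul_exp_mul_hypHeatKernel r)
  have hpos : 0 < (4 * π) ^ (-(3 : ℝ) / 2) * (limitProfile (r - a) - limitProfile r) :=
    mul_pos (by positivity) <| sub_pos.2 <|
      limitProfile_strictAntiOn hra hr₀ (sub_lt_self r ha)
  refine ⟨hlim, hpos, fun N hN => not_tendsto_zero_of_abs_le hlim hpos.ne' ?_⟩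
  filter_upwards [eventually_ge_atTop 0] with t ht
  rw [abs_mul, abs_of_nonneg (by positivity)]
  exact mul_le_mul_of_nonneg_left (hN t) (by positivity)
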